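/- arXiv:math/0210453 — 3 statements merged into one kernel-verified Lean document; each statement's English description precedes it below -/
import Mathlib

section
/- Assume f satisfies hypotheses (H1)–(H3) with b = 0 and a < 0, i.e. the Yorke condition a·𝓜(φ) ≤ f(t,φ) ≤ −a·𝓜(−φ) holds for all φ ∈ C([−1,0],ℝ). Let x be a solution of x'(t) = f(t,x_t) with m = liminf_{t→∞} x(t) < 0 < M = limsup_{t→∞} x(t). Then: (i) for a ∈ (−3/2, −1], m ≥ (a + 1/2)M and M ≤ (a + 1/2)m; (ii) for all a < 0 (with the roles as stated), m ≥ −(1/2)a²M and M ≤ a·m. -/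
open Set Filter MeasureTheory Topology

/-- The Yorke functional 𝓜(φ) = max{0, max_{s ∈ [-1,0]} φ(s)}. -/
noncomputable def yorkeM (φ : ℝ → ℝ) : ℝ := max 0 (sSup (φ '' Icc (-1 : ℝ) 0))

/-- Membership in the phase space C = C([-1,0], ℝ): we work with functions
ℝ → ℝ whose restriction to [-1,0] is continuous (only values on [-1,0] matter). -/
def InC (φ : ℝ → ℝ) : Prop := ContinuousOn φ (Icc (-1 : ℝ) 0)

/-- The segment x_t(s) = x(t+s), s ∈ [-1,0]. -/
def seg (x : ℝ → ℝ) (t : ℝ) : ℝ → ℝ := fun s => x (t + s)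

/-- Carathéodory condition: measurable in t for fixed φ, continuous in φ
(w.r.t. uniform distance on [-1,0]) for fixed t, locally dominated by an
integrable function. -/
def Caratheodory (f : ℝ → (ℝ → ℝ) → ℝ) : Prop :=
  (∀ φ, InC φ → Measurable fun t => f t φ) ∧
  (∀ t : ℝ, ∀ φ, InC φ → ∀ ε : ℝ, 0 < ε → ∃ δ : ℝ, 0 < δ ∧ ∀ ψ, InC ψ →
      (∀ s ∈ Icc (-1 : ℝ) 0, |ψ s - φ s| ≤ δ) → |f t ψ - f t φ| ≤ ε) ∧
  (∀ t : ℝ, ∀ φ, InC φ → ∃ δ : ℝ, 0 < δ ∧ ∃ m : ℝ → ℝ,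
      IntegrableOn m (Icc (t - δ) (t + δ)) ∧
      ∀ s ∈ Icc (t - δ) (t + δ), ∀ ψ, InC ψ →
        (∀ u ∈ Icc (-1 : ℝ) 0, |ψ u - φ u| ≤ δ) → |f s ψ| ≤ m s)

/-- (H1): f is Carathéodory and for every q there is ϑ(q) ≥ 0 dominating f(t,φ)
a.e. in t whenever φ ≥ q on [-1,0]. -/
def HypH1 (f : ℝ → (ℝ → ℝ) → ℝ) (θ : ℝ → ℝ) : Prop :=
  Caratheodory f ∧
  ∀ q : ℝ, 0 ≤ θ q ∧
    ∀ φ, InC φ → (∀ s ∈ Icc (-1 : ℝ) 0, q ≤ φ s) →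
      ∀ᵐ t : ℝ ∂volume, f t φ ≤ θ q

/-- (H2), the generalized Yorke condition with r(x) = ax/(1+bx):
r(𝓜(φ)) ≤ f(t,φ) for all φ, and f(t,φ) ≤ r(-𝓜(-φ)) for all φ with
min φ > -1/b (which is automatic when b = 0, since then b·φ(s) > -1 always). -/
def HypH2 (f : ℝ → (ℝ → ℝ) → ℝ) (a b : ℝ) : Prop :=
  (∀ t : ℝ, ∀ φ, InC φ → a * yorkeM φ / (1 + b * yorkeM φ) ≤ f t φ) ∧
  (∀ t : ℝ, ∀ φ, InC φ → (∀ s ∈ Icc (-1 : ℝ) 0, -1 < b * φ s) →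
      f t φ ≤ a * (-yorkeM fun s => -φ s) / (1 + b * (-yorkeM fun s => -φ s)))

/-- (H3): ∫₀^∞ f(s, p_s) ds diverges for every continuous p having a nonzero
limit at infinity. -/
def HypH3 (f : ℝ → (ℝ → ℝ) → ℝ) : Prop :=
  ∀ p : ℝ → ℝ, ContinuousOn p (Ici (-1 : ℝ)) → ∀ L : ℝ, L ≠ 0 →
    Tendsto p atTop (𝓝 L) →
    ¬∃ I : ℝ, Tendsto (fun T => ∫ s in (0 : ℝ)..T, f s (seg p s)) atTop (𝓝 I)

/-- A solution of x'(t) = f(t, x_t) on [α-1, ω) (with ω ∈ (α, +∞]) with initial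
time α: continuous on [α-1, ω) and satisfying the equivalent integral equation
(absolute continuity plus a.e. differential equation) on [α, ω). -/
def IsSolOn (f : ℝ → (ℝ → ℝ) → ℝ) (α : ℝ) (ω : EReal) (x : ℝ → ℝ) : Prop :=
  (α : EReal) < ω ∧
  ContinuousOn x {t : ℝ | α - 1 ≤ t ∧ (t : EReal) < ω} ∧
  ∀ t : ℝ, α ≤ t → (t : EReal) < ω →
    IntervalIntegrable (fun s => f s (seg x s)) volume α t ∧
    x t = x α + ∫ s in α..t, f s (seg x s)

/-- A solution on its maximal interval of existence [α-1, ω): it admits no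
extension to any strictly larger interval [α-1, ω'). -/
def IsMaximalSolOn (f : ℝ → (ℝ → ℝ) → ℝ) (α : ℝ) (ω : EReal) (x : ℝ → ℝ) : Prop :=
  IsSolOn f α ω x ∧
  ∀ ω' : EReal, ω < ω' → ∀ y : ℝ → ℝ, IsSolOn f α ω' y →
    ¬∀ t : ℝ, α - 1 ≤ t → (t : EReal) < ω → y t = x t

/-- A (global) solution of x'(t) = f(t, x_t) on [α-1, +∞). -/
def IsGlobalSol (f : ℝ → (ℝ → ℝ) → ℝ) (α : ℝ) (x : ℝ → ℝ) : Prop :=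
  ContinuousOn x (Ici (α - 1)) ∧
  ∀ t : ℝ, α ≤ t →
    IntervalIntegrable (fun s => f s (seg x s)) volume α t ∧
    x t = x α + ∫ s in α..t, f s (seg x s)

/-!
Suppose `x ≤ M` eventually, and let `z` be the last zero of `x` before a time at which `x` is
close to its liminf `m`. Since `x' ≥ a 𝓜(x_t) ≥ a M`, we get `x u ≤ -a M (z - u)` on `[z - 1, z]`,
while `x ≤ 0` after `z`; hence for `t ≥ z` the segment maximum `𝓜(x_t)` is at most
`M min(1, max(0, -a (z + 1 - t)))`. Integrating `x' ≥ a 𝓜(x_t)` from `z` gives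
`m ≥ a M ∫₀¹ min(1, -a u) du`, and this integral is at most `1`, at most `-a / 2`, and equal to
`1 + 1 / (2a)` when `a ≤ -1`. The bounds on `M` come from the same argument applied to `-x`,
which solves an equation satisfying the same lower Yorke bound.
-/

lemma yorkeM_le {φ : ℝ → ℝ} {c : ℝ} (hc : 0 ≤ c) (h : ∀ s ∈ Icc (-1 : ℝ) 0, φ s ≤ c) :
    yorkeM φ ≤ c := by
  refine max_le hc (csSup_le ((nonempty_Icc.2 (by norm_num)).image φ) ?_)
  rintro _ ⟨s, hs, rfl⟩
  exact h s hs

lemma InC.neg {φ : ℝ → ℝ} (hφ : InC φ) : InC (-φ) := ContinuousOn.neg hφ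

lemma limsup_neg_eq_neg_liminf {ι : Type*} {l : Filter ι} [l.NeBot] {u : ι → ℝ}
    (h₁ : IsBoundedUnder (· ≤ ·) l u) (h₂ : IsBoundedUnder (· ≥ ·) l u) :
    limsup (-u) l = -liminf u l :=
  (monotone_id.neg.map_liminf_of_continuousAt u continuous_neg.continuousAt
    h₁.isCoboundedUnder_ge h₂).symm

lemma liminf_neg_eq_neg_limsup {ι : Type*} {l : Filter ι} [l.NeBot] {u : ι → ℝ}
    (h₁ : IsBoundedUnder (· ≤ ·) l u) (h₂ : IsBoundedUnder (· ≥ ·) l u) :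
    liminf (-u) l = -limsup u l :=
  (monotone_id.neg.map_limsup_of_continuousAt u continuous_neg.continuousAt
    h₁ h₂.isCoboundedUnder_le).symm

lemma exists_last_zero {x : ℝ → ℝ} {p q : ℝ} (hpq : p ≤ q) (hx : ContinuousOn x (Icc p q))
    (hp : 0 ≤ x p) (hq : x q ≤ 0) :
    ∃ z ∈ Icc p q, x z = 0 ∧ ∀ u ∈ Icc z q, x u ≤ 0 := by
  set Z := Icc p q ∩ x ⁻¹' {0}
  have hZ : IsClosed Z := hx.preimage_isClosed_of_isClosed isClosed_Icc isClosed_singleton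
  have hne : Z.Nonempty := by
    obtain ⟨w, hw, hxw⟩ := intermediate_value_Icc' hpq hx ⟨hq, hp⟩
    exact ⟨w, hw, hxw⟩
  have hbdd : BddAbove Z := bddAbove_Icc.mono inter_subset_left
  obtain ⟨hzI, hz0⟩ := hZ.csSup_mem hne hbdd
  refine ⟨sSup Z, hzI, hz0, fun u hu => ?_⟩
  by_contra! hxu
  obtain ⟨w, hw, hxw⟩ := intermediate_value_Icc' hu.2
    (hx.mono (Icc_subset_Icc (hzI.1.trans hu.1) le_rfl)) ⟨hq, hxu.le⟩
  have hwZ : w ≤ sSup Z := le_csSup hbdd ⟨⟨hzI.1.trans (hu.1.trans hw.1), hw.2⟩, hxw⟩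
  have hu_eq : u = sSup Z := le_antisymm (hw.1.trans hwZ) hu.1
  exact hxu.ne' (hu_eq ▸ hz0)

def ramp (c u : ℝ) : ℝ := min 1 (max 0 (c * u))

lemma ramp_nonneg (c u : ℝ) : 0 ≤ ramp c u := le_min zero_le_one (le_max_left _ _)

lemma ramp_le_one (c u : ℝ) : ramp c u ≤ 1 := min_le_left _ _

lemma ramp_eq_zero {c u : ℝ} (hc : 0 ≤ c) (hu : u ≤ 0) : ramp c u = 0 := by
  rw [ramp, max_eq_left (mul_nonpos_of_nonneg_of_nonpos hc hu), min_eq_right zero_le_one]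

lemma continuous_ramp (c : ℝ) : Continuous (ramp c) := by
  unfold ramp; fun_prop

lemma integral_ramp_le_one (c : ℝ) : ∫ u in (0 : ℝ)..1, ramp c u ≤ 1 := by
  simpa using intervalIntegral.integral_mono_on zero_le_one
    ((continuous_ramp c).intervalIntegrable (μ := volume) _ _) intervalIntegrable_const
    fun u _ => ramp_le_one c u

lemma integral_ramp_le_half {c : ℝ} (hc : 0 ≤ c) : ∫ u in (0 : ℝ)..1, ramp c u ≤ c / 2 := by
  have h := intervalIntegral.integral_mono_on zero_le_one
    ((continuous_ramp c).intervalIntegrable (μ := volume) _ _)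
    ((continuous_const_mul c).intervalIntegrable 0 1)
    fun u hu => (min_le_right _ _).trans (max_le (mul_nonneg hc hu.1) le_rfl)
  rw [intervalIntegral.integral_const_mul, integral_id] at h
  linarith

lemma integral_ramp_of_one_le {c : ℝ} (hc : 1 ≤ c) :
    ∫ u in (0 : ℝ)..1, ramp c u = 1 - (2 * c)⁻¹ := by
  have hc0 : 0 < c := by linarith
  have hp0 : 0 ≤ c⁻¹ := inv_nonneg.2 hc0.le
  have hp1 : c⁻¹ ≤ 1 := inv_le_one_of_one_le₀ hc
  have hi := fun p q => (continuous_ramp c).intervalIntegrable (μ := volume) p q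
  have hlin : ∫ u in (0 : ℝ)..c⁻¹, ramp c u = ∫ u in (0 : ℝ)..c⁻¹, c * u := by
    refine intervalIntegral.integral_congr fun u hu => ?_
    rw [uIcc_of_le hp0] at hu
    have hcu : c * u ≤ 1 := by
      calc c * u ≤ c * c⁻¹ := mul_le_mul_of_nonneg_left hu.2 hc0.le
        _ = 1 := mul_inv_cancel₀ hc0.ne'
    rw [ramp, max_eq_right (mul_nonneg hc0.le hu.1), min_eq_right hcu]
  have hflat : ∫ u in c⁻¹..1, ramp c u = ∫ _ in c⁻¹..1, (1 : ℝ) := by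
    refine intervalIntegral.integral_congr fun u hu => ?_
    rw [uIcc_of_le hp1] at hu
    have hcu : 1 ≤ c * u := by
      calc 1 = c * c⁻¹ := (mul_inv_cancel₀ hc0.ne').symm
        _ ≤ c * u := mul_le_mul_of_nonneg_left hu.1 hc0.le
    rw [ramp, max_eq_right (zero_le_one.trans hcu), min_eq_left hcu]
  rw [← intervalIntegral.integral_add_adjacent_intervals (hi 0 c⁻¹) (hi c⁻¹ 1), hlin, hflat,
    intervalIntegral.integral_const_mul, integral_id, intervalIntegral.integral_const]
  simp only [smul_eq_mul, mul_one]
  field_simp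
  ring

lemma integral_ramp_le_integral_zero_one {c : ℝ} (hc : 0 ≤ c) (w : ℝ) :
    ∫ u in w..1, ramp c u ≤ ∫ u in (0 : ℝ)..1, ramp c u := by
  have hi := fun p q => (continuous_ramp c).intervalIntegrable (μ := volume) p q
  rw [← intervalIntegral.integral_add_adjacent_intervals (hi w 0) (hi 0 1)]
  suffices ∫ u in w..0, ramp c u ≤ 0 by linarith
  rcases le_total w 0 with hw0 | hw0
  · rw [intervalIntegral.integral_congr (g := fun _ => (0 : ℝ)) fun u hu =>
      ramp_eq_zero hc (by rw [uIcc_of_le hw0] at hu; exact hu.2)]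
    simp
  · rw [intervalIntegral.integral_symm, neg_nonpos]
    exact intervalIntegral.integral_nonneg hw0 fun u _ => ramp_nonneg c u

noncomputable def yorkeConst (a : ℝ) : ℝ := a * ∫ u in (0 : ℝ)..1, ramp (-a) u

lemma le_yorkeConst {a : ℝ} (ha : a ≤ 0) : a ≤ yorkeConst a := by
  unfold yorkeConst
  simpa using mul_le_mul_of_nonpos_left (integral_ramp_le_one (-a)) ha

lemma neg_sq_div_two_le_yorkeConst {a : ℝ} (ha : a ≤ 0) : -(a ^ 2 / 2) ≤ yorkeConst a := by
  have h := mul_le_mul_of_nonpos_left (integral_ramp_le_half (neg_nonneg.2 ha)) ha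
  unfold yorkeConst
  linarith

lemma yorkeConst_of_le_neg_one {a : ℝ} (ha : a ≤ -1) : yorkeConst a = a + 1 / 2 := by
  have ha0 : a ≠ 0 := by linarith
  rw [yorkeConst, integral_ramp_of_one_le (by linarith)]
  field_simp
  ring

lemma yorkeM_seg_le_ramp {x : ℝ → ℝ} {a M z s t : ℝ} (ha : a ≤ 0) (hM : 0 ≤ M)
    (hbefore : ∀ u ∈ Icc (z - 1) z, x u ≤ M ∧ x u ≤ -a * M * (z - u))
    (hafter : ∀ u ∈ Icc z s, x u ≤ 0) (ht : t ∈ Icc z s) :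
    yorkeM (seg x t) ≤ M * ramp (-a) (z + 1 - t) := by
  have hbound := mul_nonneg hM (ramp_nonneg (-a) (z + 1 - t))
  refine yorkeM_le hbound fun v hv => ?_
  obtain ⟨hv₁, hv₂⟩ := hv
  rcases le_or_gt (t + v) z with hle | hgt
  · obtain ⟨hxM, hxlin⟩ := hbefore (t + v) ⟨by linarith [ht.1], hle⟩
    show x (t + v) ≤ M * min 1 (max 0 (-a * (z + 1 - t)))
    rw [mul_min_of_nonneg _ _ hM, mul_one, mul_max_of_nonneg _ _ hM, mul_zero]
    refine le_min hxM (le_max_of_le_right (hxlin.trans ?_))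
    nlinarith [mul_nonneg (neg_nonneg.2 ha) hM]
  · exact (hafter (t + v) ⟨hgt.le, by linarith [ht.2]⟩).trans hbound

namespace IsGlobalSol

variable {f : ℝ → (ℝ → ℝ) → ℝ} {α : ℝ} {x : ℝ → ℝ}

lemma inC_seg (hx : IsGlobalSol f α x) {t : ℝ} (ht : α ≤ t) : InC (seg x t) :=
  hx.1.comp (continuous_const_add t).continuousOn fun v hv => by
    simp only [mem_Ici]
    linarith [hv.1]

lemma intervalIntegrable (hx : IsGlobalSol f α x) {u t : ℝ} (hu : α ≤ u) (ht : α ≤ t) :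
    IntervalIntegrable (fun s => f s (seg x s)) volume u t :=
  (hx.2 u hu).1.symm.trans (hx.2 t ht).1

lemma sub_eq_integral (hx : IsGlobalSol f α x) {u t : ℝ} (hu : α ≤ u) (ht : α ≤ t) :
    x t - x u = ∫ s in u..t, f s (seg x s) := by
  rw [(hx.2 t ht).2, (hx.2 u hu).2, add_sub_add_left_eq_sub,
    intervalIntegral.integral_interval_sub_left (hx.2 t ht).1 (hx.2 u hu).1]

lemma mul_sub_le_sub (hx : IsGlobalSol f α x) {c u t : ℝ} (hu : α ≤ u) (hut : u ≤ t)
    (hc : ∀ s ∈ Icc u t, c ≤ f s (seg x s)) : c * (t - u) ≤ x t - x u := by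
  have h := intervalIntegral.integral_mono_on hut intervalIntegrable_const
    (hx.intervalIntegrable hu (hu.trans hut)) hc
  rwa [intervalIntegral.integral_const, smul_eq_mul, mul_comm, ← hx.sub_eq_integral hu
    (hu.trans hut)] at h

lemma neg (hx : IsGlobalSol f α x) : IsGlobalSol (fun t φ => -f t (-φ)) α (-x) := by
  have hseg : ∀ s, -seg (-x) s = seg x s := fun s => neg_neg (seg x s)
  refine ⟨hx.1.neg, fun t ht => ?_⟩
  simp only [hseg, Pi.neg_apply, intervalIntegral.integral_neg]
  exact ⟨(hx.2 t ht).1.neg, by rw [(hx.2 t ht).2]; ring⟩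

variable {a : ℝ}

theorem yorkeConst_mul_le (hx : IsGlobalSol f α x) (ha : a ≤ 0)
    (hf : ∀ t φ, InC φ → a * yorkeM φ ≤ f t φ) {M m : ℝ}
    (hub : ∀ᶠ t in atTop, x t ≤ M) (hpos : ∃ᶠ t in atTop, 0 ≤ x t)
    (hdip : ∃ᶠ t in atTop, x t ≤ m) (hm : m ≤ 0) : yorkeConst a * M ≤ m := by
  obtain ⟨T, hT⟩ := eventually_atTop.1 hub
  obtain ⟨p, hxp, hp⟩ := (hpos.and_eventually (eventually_ge_atTop (max T α + 2))).exists
  obtain ⟨s, hxs, hps⟩ := (hdip.and_eventually (eventually_ge_atTop p)).exists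
  have hTp : T ≤ p - 2 := by linarith [le_max_left T α]
  have hαp : α ≤ p - 2 := by linarith [le_max_right T α]
  have hM : 0 ≤ M := hxp.trans (hT p (by linarith))
  obtain ⟨z, ⟨hpz, hzs⟩, hxz, hafter⟩ := exists_last_zero hps
    (hx.1.mono fun u hu => by simp only [mem_Ici]; linarith [hu.1]) hxp (hxs.trans hm)
  have hdrift : ∀ r ∈ Icc (z - 1) z, a * M ≤ f r (seg x r) := fun r hr =>
    have hseg : yorkeM (seg x r) ≤ M := yorkeM_le hM fun v hv => hT _ (by linarith [hr.1, hv.1])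
    (mul_le_mul_of_nonpos_left hseg ha).trans (hf r _ (hx.inC_seg (by linarith [hr.1])))
  have hbefore : ∀ u ∈ Icc (z - 1) z, x u ≤ M ∧ x u ≤ -a * M * (z - u) := fun u hu =>
    ⟨hT u (by linarith [hu.1]), by
      linarith [hx.mul_sub_le_sub (by linarith [hu.1]) hu.2 fun r hr =>
        hdrift r ⟨hu.1.trans hr.1, hr.2⟩]⟩
  have hαz : α ≤ z := by linarith
  calc yorkeConst a * M = a * M * ∫ u in (0 : ℝ)..1, ramp (-a) u := by rw [yorkeConst]; ring
    _ ≤ a * M * ∫ u in (z + 1 - s)..1, ramp (-a) u :=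
      mul_le_mul_of_nonpos_left (integral_ramp_le_integral_zero_one (neg_nonneg.2 ha) _)
        (mul_nonpos_of_nonpos_of_nonneg ha hM)
    _ = ∫ t in z..s, a * M * ramp (-a) (z + 1 - t) := by
      rw [intervalIntegral.integral_const_mul, intervalIntegral.integral_comp_sub_left
        (ramp (-a)), add_sub_cancel_left]
    _ ≤ ∫ t in z..s, f t (seg x t) := by
      have hcont : Continuous fun t => a * M * ramp (-a) (z + 1 - t) :=
        continuous_const.mul ((continuous_ramp _).comp (continuous_sub_left _))
      refine intervalIntegral.integral_mono_on hzs (hcont.intervalIntegrable _ _)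
        (hx.intervalIntegrable hαz (hαz.trans hzs)) fun t ht => ?_
      rw [mul_assoc]
      exact (mul_le_mul_of_nonpos_left (yorkeM_seg_le_ramp ha hM hbefore hafter ht) ha).trans
        (hf t _ (hx.inC_seg (hαz.trans ht.1)))
    _ = x s := by rw [← hx.sub_eq_integral hαz (hαz.trans hzs), hxz, sub_zero]
    _ ≤ m := hxs

theorem yorkeConst_mul_limsup_le_liminf (hx : IsGlobalSol f α x) (ha : a ≤ 0)
    (hf : ∀ t φ, InC φ → a * yorkeM φ ≤ f t φ)
    (hbdd₁ : IsBoundedUnder (· ≤ ·) atTop x) (hbdd₂ : IsBoundedUnder (· ≥ ·) atTop x)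
    (hm0 : liminf x atTop < 0) (hM0 : 0 < limsup x atTop) :
    yorkeConst a * limsup x atTop ≤ liminf x atTop := by
  have hpos : ∃ᶠ t in atTop, 0 ≤ x t :=
    (frequently_lt_of_lt_limsup hbdd₂.isCoboundedUnder_le hM0).mono fun _ h => h.le
  refine le_of_forall_gt_imp_ge_of_dense fun c hc => ?_
  have hdip : ∃ᶠ t in atTop, x t ≤ min c 0 :=
    (frequently_lt_of_liminf_lt hbdd₁.isCoboundedUnder_ge (lt_min hc hm0)).mono fun _ h => h.le
  have hbound : ∀ M > limsup x atTop, yorkeConst a * M ≤ c := fun M hM =>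
    (hx.yorkeConst_mul_le ha hf ((eventually_lt_of_limsup_lt hM hbdd₁).mono fun _ h => h.le)
      hpos hdip (min_le_right c 0)).trans (min_le_left c 0)
  exact le_of_tendsto ((continuous_const_mul _).continuousWithinAt (s := Ioi _))
    (eventually_nhdsWithin_of_forall hbound)

end IsGlobalSol

theorem yorke_case_bounds_general
    (f : ℝ → (ℝ → ℝ) → ℝ) (a : ℝ) (ha : a < 0)
    (h2 : HypH2 f a 0)
    (α : ℝ) (x : ℝ → ℝ) (hx : IsGlobalSol f α x)
    (hxbdd₁ : IsBoundedUnder (· ≤ ·) atTop x)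
    (hxbdd₂ : IsBoundedUnder (· ≥ ·) atTop x)
    (m M : ℝ) (hm : m = liminf x atTop) (hM : M = limsup x atTop)
    (hm0 : m < 0) (hM0 : 0 < M) :
    (-(3 / 2) < a ∧ a ≤ -1 → (a + 1 / 2) * M ≤ m ∧ M ≤ (a + 1 / 2) * m) ∧
    (-(1 / 2) * a ^ 2 * M ≤ m ∧ M ≤ a * m) := by
  have hlower : ∀ t φ, InC φ → a * yorkeM φ ≤ f t φ := fun t φ hφ => by
    simpa using h2.1 t φ hφ
  have hlower_neg : ∀ t φ, InC φ → a * yorkeM φ ≤ -f t (-φ) := fun t φ hφ => by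
    have h := h2.2 t (-φ) hφ.neg fun _ _ => by norm_num
    simp only [zero_mul, add_zero, div_one, Pi.neg_apply, neg_neg] at h
    linarith
  have hup : yorkeConst a * M ≤ m := by
    subst hm hM
    exact hx.yorkeConst_mul_limsup_le_liminf ha.le hlower hxbdd₁ hxbdd₂ hm0 hM0
  have hdown : yorkeConst a * -m ≤ -M := by
    have h := hx.neg.yorkeConst_mul_limsup_le_liminf ha.le hlower_neg
      (isBoundedUnder_le_neg.2 hxbdd₂) (isBoundedUnder_ge_neg.2 hxbdd₁)
    rw [limsup_neg_eq_neg_liminf hxbdd₁ hxbdd₂, liminf_neg_eq_neg_limsup hxbdd₁ hxbdd₂, ← hm,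
      ← hM] at h
    exact h (by linarith) (by linarith)
  refine ⟨fun ⟨_, ha1⟩ => ?_, ?_, ?_⟩
  · rw [yorkeConst_of_le_neg_one ha1] at hup hdown
    constructor <;> linarith
  · nlinarith [neg_sq_div_two_le_yorkeConst ha.le]
  · nlinarith [le_yorkeConst ha.le]

/-- The b = 0 (Yorke) case: under (H1)-(H3) with the Yorke condition
a𝓜(φ) ≤ f(t,φ) ≤ -a𝓜(-φ), a < 0, for a solution with
m = liminf x < 0 < M = limsup x: (i) if a ∈ (-3/2, -1] then m ≥ (a+1/2)M and
M ≤ (a+1/2)m; (ii) m ≥ -(1/2)a²M and M ≤ am. -/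
theorem yorke_case_bounds
    (f : ℝ → (ℝ → ℝ) → ℝ) (θ : ℝ → ℝ) (a : ℝ) (ha : a < 0)
    (h1 : HypH1 f θ) (h2 : HypH2 f a 0) (h3 : HypH3 f)
    (α : ℝ) (x : ℝ → ℝ) (hx : IsGlobalSol f α x)
    (hxbdd₁ : IsBoundedUnder (· ≤ ·) atTop x)
    (hxbdd₂ : IsBoundedUnder (· ≥ ·) atTop x)
    (m M : ℝ) (hm : m = liminf x atTop) (hM : M = limsup x atTop)
    (hm0 : m < 0) (hM0 : 0 < M) :
    (-(3 / 2) < a ∧ a ≤ -1 → (a + 1 / 2) * M ≤ m ∧ M ≤ (a + 1 / 2) * m) ∧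
    (-(1 / 2) * a ^ 2 * M ≤ m ∧ M ≤ a * m) :=
  yorke_case_bounds_general f a ha h2 α x hx hxbdd₁ hxbdd₂ m M hm hM hm0 hM0
end

section
/- Let a < 0, b ≥ 1/2, and r(x) = ax/(1+bx). Set r₁(x) = ax/(1 + (b − 1/2)x). Then r(e^x − 1) ≤ r₁(x) for all x < 0, and r(e^x − 1) ≥ r₁(x) for all x > 0 (on the domains where both sides are defined, i.e. x > −1/(b−1/2) when b > 1/2 for the left inequality side, noting e^x − 1 > −1/b automatically for b ≥ 1/2; for b = 1/2, r₁(x) = ax). -/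
open Set Filter Topology

lemma exp_comp_key_antitone :
    Antitone (fun x : ℝ => Real.exp x * (1 - x / 2) - (1 + x / 2)) := by
  apply antitone_of_deriv_nonpos
  · fun_prop
  · intro x
    have hd : HasDerivAt (fun x : ℝ => Real.exp x * (1 - x / 2) - (1 + x / 2))
        (Real.exp x * (1 - x / 2) + Real.exp x * (-(1 / 2)) - 1 / 2) x := by
      exact ((Real.hasDerivAt_exp x).mul
        (((hasDerivAt_id x).div_const 2).const_sub 1)).sub
        (((hasDerivAt_id x).div_const 2).const_add 1)
    rw [hd.deriv]
    have h1 : (1 - x) ≤ Real.exp (-x) := by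
      have := Real.add_one_le_exp (-x); linarith
    have h2 : Real.exp x * (1 - x) ≤ 1 := by
      have hpos := Real.exp_pos x
      calc Real.exp x * (1 - x) ≤ Real.exp x * Real.exp (-x) := by
            rcases le_or_gt (1 - x) 0 with h | h
            · nlinarith [Real.exp_pos (-x)]
            · exact mul_le_mul_of_nonneg_left h1 hpos.le
        _ = 1 := by rw [← Real.exp_add]; simp
    nlinarith

lemma exp_comp_key_nonneg {x : ℝ} (hx : x ≤ 0) :
    1 + x / 2 ≤ Real.exp x * (1 - x / 2) := by
  have := exp_comp_key_antitone hx
  simp only [Real.exp_zero] at this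
  linarith

lemma exp_comp_key_nonpos {x : ℝ} (hx : 0 ≤ x) :
    Real.exp x * (1 - x / 2) ≤ 1 + x / 2 := by
  have := exp_comp_key_antitone hx
  simp only [Real.exp_zero] at this
  linarith

/-- Comparison used in (2.6)/(ar1): for a < 0, b ≥ 1/2, r(x) = ax/(1+bx) and
r₁(x) = ax/(1 + (b - 1/2)x), one has r(eˣ - 1) ≤ r₁(x) for x < 0 (on the
domain of r₁, i.e. x > -1/(b - 1/2) when b > 1/2) and r(eˣ - 1) ≥ r₁(x)
for x > 0. -/
theorem exp_comparison_upper (a b : ℝ) (ha : a < 0) (hb : 1 / 2 ≤ b)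
    (r r₁ : ℝ → ℝ)
    (hr : ∀ x : ℝ, r x = a * x / (1 + b * x))
    (hr₁ : ∀ x : ℝ, r₁ x = a * x / (1 + (b - 1 / 2) * x)) :
    (∀ x : ℝ, x < 0 → (1 / 2 < b → -(b - 1 / 2)⁻¹ < x) →
      r (Real.exp x - 1) ≤ r₁ x) ∧
    (∀ x : ℝ, 0 < x → r₁ x ≤ r (Real.exp x - 1)) := by
  constructor
  · intro x hx hdom
    rw [hr, hr₁]
    set E := Real.exp x with hE
    have hE0 : 0 < E := Real.exp_pos x
    have hE1 : E < 1 := by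
      rw [hE]; exact Real.exp_lt_one_iff.mpr hx
    -- denominator of r₁ is positive
    have hd2 : 0 < 1 + (b - 1 / 2) * x := by
      rcases eq_or_lt_of_le hb with h | h
      · rw [← h]; norm_num
      · have hx2 := hdom h
        have ht : 0 < b - 1 / 2 := by linarith
        have : (b - 1 / 2) * (-(b - 1 / 2)⁻¹) < (b - 1 / 2) * x :=
          mul_lt_mul_of_pos_left hx2 ht
        rw [mul_neg, mul_inv_cancel₀ (ne_of_gt ht)] at this
        linarith
    -- denominator of r is positive
    have hd1 : 0 < 1 + b * (E - 1) := by
      rcases le_or_gt b 1 with hb1 | hb1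
      · nlinarith
      · have ht : 0 < b - 1 / 2 := by linarith
        have hx2 := hdom (by linarith)
        set u := (b - 1 / 2)⁻¹ with hu
        have hu0 : 0 < u := inv_pos.mpr ht
        have huc : (b - 1 / 2) * u = 1 := mul_inv_cancel₀ (ne_of_gt ht)
        have hkey : 1 + (-u) / 2 ≤ Real.exp (-u) * (1 - (-u) / 2) :=
          exp_comp_key_nonneg (by linarith)
        have hEe : Real.exp (-u) < E := by
          rw [hE]; exact Real.exp_lt_exp.mpr hx2
        nlinarith [Real.exp_pos (-u), mul_le_mul_of_nonneg_right hkey ht.le]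
    rw [div_le_div_iff₀ hd1 hd2]
    have hg : 1 + x / 2 ≤ E * (1 - x / 2) := exp_comp_key_nonneg hx.le
    nlinarith [mul_nonneg (by linarith : (0:ℝ) ≤ -a)
      (by linarith : (0:ℝ) ≤ E * (1 - x / 2) - (1 + x / 2))]
  · intro x hx
    rw [hr, hr₁]
    set E := Real.exp x with hE
    have hE0 : 0 < E := Real.exp_pos x
    have hE1 : 1 < E := by have := Real.add_one_le_exp x; rw [hE]; linarith
    have hd2 : 0 < 1 + (b - 1 / 2) * x := by nlinarith
    have hd1 : 0 < 1 + b * (E - 1) := by nlinarith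
    rw [div_le_div_iff₀ hd2 hd1]
    have hg : E * (1 - x / 2) ≤ 1 + x / 2 := exp_comp_key_nonpos hx.le
    nlinarith [mul_nonneg (by linarith : (0:ℝ) ≤ -a)
      (by linarith : (0:ℝ) ≤ (1 + x / 2) - E * (1 - x / 2))]
end

section
/- Let a < 0, 0 ≤ b ≤ 1/2, and r(x) = ax/(1+bx). Set r₂(x) = ax/(1 + (1/2 − b)x) and w(x) = −r(e^{−x} − 1). Then w(x) ≥ r₂(x) for all x > 0, and w(x) ≤ r₂(x) for all x < 0 with x > −1/(1/2 − b) when b < 1/2 (for b = 1/2, r₂(x) = ax and the inequalities hold for all x of the corresponding sign). Equivalently, −r(e^{−x}−1) compared with r₂(x) changes side at x = 0 with r₂ below w on (0,∞) and above w on the negative side of its domain. -/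
/-!
Put `u = e^{-x} - 1`. Clearing the (positive) denominators, `r₂ x ≤ w x` becomes
`a · (x (1 + b u) + u (1 + (1/2 - b) x)) ≤ 0`, and the bracket does not depend on `b`: it equals
`x (1 + e^{-x}) / 2 - (1 - e^{-x})`, the error of the trapezoid rule for `∫₀ˣ e^{-t} dt`.
Since `e^{-t}` is convex this error has the sign of `x`, which gives both inequalities.
-/

open Real

noncomputable def trapezoidError (x : ℝ) : ℝ := x * (1 + exp (-x)) / 2 - (1 - exp (-x))

lemma trapezoidError_zero : trapezoidError 0 = 0 := by
  simp [trapezoidError]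

lemma hasDerivAt_trapezoidError (x : ℝ) :
    HasDerivAt trapezoidError ((1 - (1 + x) * exp (-x)) / 2) x := by
  have hexp : HasDerivAt (fun x => exp (-x)) (-exp (-x)) x := by
    simpa using (hasDerivAt_neg x).exp
  have := ((((hasDerivAt_id x).mul (hexp.const_add 1)).div_const 2).sub (hexp.const_sub 1))
  exact this.congr_deriv (by simp only [id]; ring)

lemma monotone_trapezoidError : Monotone trapezoidError := by
  refine monotone_of_deriv_nonneg (fun x => (hasDerivAt_trapezoidError x).differentiableAt)
    fun x => ?_
  rw [(hasDerivAt_trapezoidError x).deriv]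
  have h : (1 + x) * exp (-x) ≤ 1 := by
    calc (1 + x) * exp (-x) ≤ exp x * exp (-x) := by
          gcongr; linarith [add_one_le_exp x]
      _ = 1 := by rw [← exp_add, add_neg_cancel, exp_zero]
  linarith

lemma trapezoidError_nonneg {x : ℝ} (hx : 0 ≤ x) : 0 ≤ trapezoidError x :=
  trapezoidError_zero ▸ monotone_trapezoidError hx

lemma trapezoidError_nonpos {x : ℝ} (hx : x ≤ 0) : trapezoidError x ≤ 0 :=
  trapezoidError_zero ▸ monotone_trapezoidError hx

lemma neg_div_sub_div_eq_trapezoidError {a b x : ℝ} (hp : 1 + b * (exp (-x) - 1) ≠ 0)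
    (hq : 1 + (1 / 2 - b) * x ≠ 0) :
    -(a * (exp (-x) - 1) / (1 + b * (exp (-x) - 1))) - a * x / (1 + (1 / 2 - b) * x) =
      -a * trapezoidError x / ((1 + b * (exp (-x) - 1)) * (1 + (1 / 2 - b) * x)) := by
  rw [neg_div', div_sub_div _ _ hp hq, trapezoidError]
  ring

lemma one_add_mul_pos {c x : ℝ} (hc : 0 ≤ c) (hx : 0 < c → -c⁻¹ < x) : 0 < 1 + c * x := by
  rcases hc.eq_or_lt with rfl | hc
  · simp
  have h := mul_lt_mul_of_pos_left (hx hc) hc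
  rw [mul_neg, mul_inv_cancel₀ hc.ne'] at h
  linarith

/-- Comparison used in (ar3)/(ar4): for a < 0, 0 ≤ b ≤ 1/2,
r(x) = ax/(1+bx), r₂(x) = ax/(1 + (1/2 - b)x) and w(x) = -r(e⁻ˣ - 1), one has
w(x) ≥ r₂(x) for x > 0 and w(x) ≤ r₂(x) for x < 0 (on the domain of r₂, i.e.
x > -1/(1/2 - b) when b < 1/2). -/
theorem exp_comparison_lower (a b : ℝ) (ha : a < 0) (hb₀ : 0 ≤ b)
    (hb : b ≤ 1 / 2)
    (r r₂ w : ℝ → ℝ)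
    (hr : ∀ x : ℝ, r x = a * x / (1 + b * x))
    (hr₂ : ∀ x : ℝ, r₂ x = a * x / (1 + (1 / 2 - b) * x))
    (hw : ∀ x : ℝ, w x = -r (Real.exp (-x) - 1)) :
    (∀ x : ℝ, 0 < x → r₂ x ≤ w x) ∧
    (∀ x : ℝ, x < 0 → (b < 1 / 2 → -(1 / 2 - b)⁻¹ < x) → w x ≤ r₂ x) := by
  have hc : 0 ≤ 1 / 2 - b := sub_nonneg.2 hb
  have hp (x : ℝ) : 0 < 1 + b * (exp (-x) - 1) := by
    nlinarith [mul_nonneg hb₀ (exp_pos (-x)).le]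
  have hdiff (x : ℝ) (hq : 0 < 1 + (1 / 2 - b) * x) :
      w x - r₂ x = -a * trapezoidError x / ((1 + b * (exp (-x) - 1)) * (1 + (1 / 2 - b) * x)) := by
    rw [hw, hr, hr₂, neg_div_sub_div_eq_trapezoidError (hp x).ne' hq.ne']
  refine ⟨fun x hx => ?_, fun x hx hdom => ?_⟩
  · have hq : 0 < 1 + (1 / 2 - b) * x := by positivity
    refine sub_nonneg.1 ?_
    rw [hdiff x hq]
    exact div_nonneg (mul_nonneg (by linarith) (trapezoidError_nonneg hx.le))
      (mul_pos (hp x) hq).le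
  · have hq : 0 < 1 + (1 / 2 - b) * x := one_add_mul_pos hc fun h => hdom (sub_pos.1 h)
    refine sub_nonpos.1 ?_
    rw [hdiff x hq]
    exact div_nonpos_of_nonpos_of_nonneg
      (mul_nonpos_of_nonneg_of_nonpos (by linarith) (trapezoidError_nonpos hx.le))
      (mul_pos (hp x) hq).le
end
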